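/- (John–Nirenberg–Strömberg type lemma.) Let Δ = ⋃_{n≥0} Δₙ be a dyadic filtration on a measure space (Y, μ) and let α : Δ → [0,∞). Suppose there exist N > 0 and η > 0 such that for every Q₀ ∈ Δ, μ({x ∈ Q₀ : Σ_{Q ∈ Δ, x ∈ Q, Q ⊆ Q₀} α(Q) ≤ N}) ≥ η·μ(Q₀). Then there is a constant C depending only on N and η (one may take C = N/η²) such that for every Q₀ ∈ Δ, Σ_{Q ∈ Δ, Q ⊆ Q₀} α(Q)·μ(Q) ≤ C·μ(Q₀). -/

import Mathlib

/-!
Write `F_S(x) = Σ_{x ∈ Q ⊆ S} α(Q)` (`dyadicSum`) and `G_Q = {x ∈ Q : F_Q(x) ≤ N}` (`goodSet`),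
so that `η μ(Q) ≤ μ(G_Q)` for every cube. Then
`Σ_{Q ⊆ Q₀} α(Q) μ(Q) ≤ η⁻¹ Σ_{Q ⊆ Q₀} α(Q) μ(G_Q) = η⁻¹ ∫ Σ_{Q ⊆ Q₀} α(Q) 1_{G_Q}`,
and the integrand is at most `N · 1_{Q₀}`: the cubes `Q ⊆ Q₀` with `x ∈ G_Q` are nested, all
of them lie in the largest one `Q*`, so their sum is at most `F_{Q*}(x) ≤ N`. This gives the
bound `N/η`, which is at most `N/η²` because `η ≤ 1`.
-/

open MeasureTheory Set
open scoped ENNReal Classical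

/-- A dyadic filtration `Δ = ⋃_{n ≥ 0} Δₙ` on a measure space `(Y, μ)`: each `Δₙ` is a
countable collection of pairwise disjoint measurable sets of positive finite measure,
covering `Y` up to a null set, and every `Q ∈ Δₙ₊₁` is contained in some `Q' ∈ Δₙ`. -/
def IsDyadicFiltration {Y : Type*} [MeasurableSpace Y] (μ : Measure Y)
    (Δ : ℕ → Set (Set Y)) : Prop :=
  (∀ n, (Δ n).Countable) ∧
  (∀ n, (Δ n).PairwiseDisjoint id) ∧
  (∀ n, ∀ Q ∈ Δ n, MeasurableSet Q ∧ 0 < μ Q ∧ μ Q < ⊤) ∧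
  (∀ n, μ (univ \ ⋃₀ Δ n) = 0) ∧
  (∀ n, ∀ Q ∈ Δ (n + 1), ∃ Q' ∈ Δ n, Q ⊆ Q')

noncomputable def dyadicSum {Y : Type*} (Δ : ℕ → Set (Set Y)) (α : Set Y → ℝ≥0∞) (S : Set Y)
    (x : Y) : ℝ≥0∞ :=
  ∑' m : ℕ, ∑' Q : Δ m, if x ∈ (Q : Set Y) ∧ (Q : Set Y) ⊆ S then α Q else 0

def goodSet {Y : Type*} (Δ : ℕ → Set (Set Y)) (α : Set Y → ℝ≥0∞) (M : ℝ≥0∞) (S : Set Y) :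
    Set Y :=
  {x ∈ S | dyadicSum Δ α S x ≤ M}

namespace IsDyadicFiltration

variable {Y : Type*} [MeasurableSpace Y] {μ : Measure Y} {Δ : ℕ → Set (Set Y)}
  (α : Set Y → ℝ≥0∞)

lemma eq_of_mem_of_mem (hΔ : IsDyadicFiltration μ Δ) {m : ℕ} {Q Q' : Set Y}
    (hQ : Q ∈ Δ m) (hQ' : Q' ∈ Δ m) {x : Y} (hx : x ∈ Q) (hx' : x ∈ Q') : Q = Q' :=
  (hΔ.2.1 m).elim hQ hQ' (not_disjoint_iff.mpr ⟨x, hx, hx'⟩)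

lemma subset_of_le_of_mem (hΔ : IsDyadicFiltration μ Δ) {m n : ℕ} (hmn : m ≤ n)
    {Q Q' : Set Y} (hQ : Q ∈ Δ m) (hQ' : Q' ∈ Δ n) {x : Y} (hx : x ∈ Q) (hx' : x ∈ Q') :
    Q' ⊆ Q := by
  induction n, hmn using Nat.le_induction generalizing Q' with
  | base => exact (hΔ.eq_of_mem_of_mem hQ hQ' hx hx').ge
  | succ n _ ih =>
    obtain ⟨Q'', hQ'', hQ'Q''⟩ := hΔ.2.2.2.2 n Q' hQ'
    exact hQ'Q''.trans (ih hQ'' (hQ'Q'' hx'))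

lemma measurable_dyadicSum (hΔ : IsDyadicFiltration μ Δ) (S : Set Y) :
    Measurable (dyadicSum Δ α S) := by
  have := fun m ↦ (hΔ.1 m).to_subtype
  refine Measurable.tsum fun m ↦ Measurable.tsum fun Q ↦ ?_
  by_cases hQS : (Q : Set Y) ⊆ S
  · simp only [hQS, and_true]
    exact measurable_const.ite (hΔ.2.2.1 m Q Q.2).1 measurable_const
  · simp only [hQS, and_false, if_false]
    exact measurable_const

lemma measurableSet_goodSet (hΔ : IsDyadicFiltration μ Δ) (M : ℝ≥0∞) {m : ℕ} {Q : Set Y}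
    (hQ : Q ∈ Δ m) : MeasurableSet (goodSet Δ α M Q) :=
  (hΔ.2.2.1 m Q hQ).1.inter (hΔ.measurable_dyadicSum α Q measurableSet_Iic)

lemma tsum_indicator_goodSet_le (hΔ : IsDyadicFiltration μ Δ) (M : ℝ≥0∞) (S : Set Y) (x : Y) :
    ∑' m : ℕ, ∑' Q : Δ m,
        (if (Q : Set Y) ⊆ S then (goodSet Δ α M Q).indicator (fun _ ↦ α Q) x else 0)
      ≤ S.indicator (fun _ ↦ M) x := by
  have hvanish : ∀ m (Q : Δ m), ¬((Q : Set Y) ⊆ S ∧ x ∈ goodSet Δ α M Q) →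
      (if (Q : Set Y) ⊆ S then (goodSet Δ α M Q).indicator (fun _ ↦ α Q) x else 0) = 0 := by
    intro m Q hQ
    split_ifs with hQS
    · exact indicator_of_notMem (fun hx ↦ hQ ⟨hQS, hx⟩) _
    · rfl
  by_cases hgood : ∃ m : ℕ, ∃ Q : Δ m, (Q : Set Y) ⊆ S ∧ x ∈ goodSet Δ α M Q
  swap
  · refine (ENNReal.tsum_eq_zero.2 fun m ↦ ENNReal.tsum_eq_zero.2 fun Q ↦ ?_).trans_le zero_le
    exact hvanish m Q fun hQ ↦ hgood ⟨m, Q, hQ⟩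
  -- every cube `Q ⊆ S` with `x ∈ G_Q` lies in the one of smallest level
  obtain ⟨Qmax, hQmaxS, hxQmax, hFmax⟩ := Nat.find_spec hgood
  rw [indicator_of_mem (hQmaxS hxQmax)]
  refine le_trans ?_ hFmax
  refine ENNReal.tsum_le_tsum fun m ↦ ENNReal.tsum_le_tsum fun Q ↦ ?_
  by_cases hQ : (Q : Set Y) ⊆ S ∧ x ∈ goodSet Δ α M Q
  · have hQQmax : (Q : Set Y) ⊆ Qmax :=
      hΔ.subset_of_le_of_mem (Nat.find_min' hgood ⟨Q, hQ⟩) Qmax.2 Q.2 hxQmax hQ.2.1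
    simp [hQ.1, hQ.2, hQ.2.1, hQQmax]
  · rw [hvanish m Q hQ]
    exact zero_le

lemma lintegral_tsum_indicator_goodSet (hΔ : IsDyadicFiltration μ Δ) (M : ℝ≥0∞) (S : Set Y) :
    ∫⁻ x, ∑' m : ℕ, ∑' Q : Δ m,
        (if (Q : Set Y) ⊆ S then (goodSet Δ α M Q).indicator (fun _ ↦ α Q) x else 0) ∂μ
      = ∑' m : ℕ, ∑' Q : Δ m, if (Q : Set Y) ⊆ S then α Q * μ (goodSet Δ α M Q) else 0 := by
  have := fun m ↦ (hΔ.1 m).to_subtype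
  have hmeas : ∀ (m : ℕ) (Q : Δ m), Measurable fun x ↦
      if (Q : Set Y) ⊆ S then (goodSet Δ α M Q).indicator (fun _ ↦ α Q) x else 0 :=
    fun m Q ↦ Measurable.ite (.const _)
      (measurable_const.indicator (hΔ.measurableSet_goodSet α M Q.2)) measurable_const
  rw [lintegral_tsum fun m ↦ (Measurable.tsum fun Q ↦ hmeas m Q).aemeasurable]
  refine tsum_congr fun m ↦ ?_
  rw [lintegral_tsum fun Q ↦ (hmeas m Q).aemeasurable]
  refine tsum_congr fun Q ↦ ?_
  split_ifs
  · exact lintegral_indicator_const (hΔ.measurableSet_goodSet α M Q.2) _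
  · exact lintegral_zero

theorem tsum_mul_measure_le (hΔ : IsDyadicFiltration μ Δ) {C M : ℝ≥0∞}
    (hgood : ∀ m, ∀ Q ∈ Δ m, μ Q ≤ C * μ (goodSet Δ α M Q)) {S : Set Y} (hS : MeasurableSet S) :
    ∑' m : ℕ, ∑' Q : Δ m, (if (Q : Set Y) ⊆ S then α Q * μ Q else 0) ≤ C * M * μ S :=
  calc ∑' m : ℕ, ∑' Q : Δ m, (if (Q : Set Y) ⊆ S then α Q * μ Q else 0)
      ≤ ∑' m : ℕ, ∑' Q : Δ m,
          C * (if (Q : Set Y) ⊆ S then α Q * μ (goodSet Δ α M Q) else 0) := by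
        refine ENNReal.tsum_le_tsum fun m ↦ ENNReal.tsum_le_tsum fun Q ↦ ?_
        split_ifs
        · rw [mul_left_comm]
          exact mul_le_mul_right (hgood m Q Q.2) _
        · rw [mul_zero]
    _ = C * ∫⁻ x, ∑' m : ℕ, ∑' Q : Δ m,
          (if (Q : Set Y) ⊆ S then (goodSet Δ α M Q).indicator (fun _ ↦ α Q) x else 0) ∂μ := by
        simp only [ENNReal.tsum_mul_left, hΔ.lintegral_tsum_indicator_goodSet]
    _ ≤ C * ∫⁻ x, S.indicator (fun _ ↦ M) x ∂μ :=
        mul_le_mul_right (lintegral_mono (hΔ.tsum_indicator_goodSet_le α M S)) _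
    _ = C * M * μ S := by rw [lintegral_indicator_const hS, mul_assoc]

end IsDyadicFiltration

theorem john_nirenberg_stromberg_general {Y : Type*} [MeasurableSpace Y] (μ : Measure Y)
    (Δ : ℕ → Set (Set Y)) (hΔ : IsDyadicFiltration μ Δ)
    (α : Set Y → ℝ≥0∞) (N η : ℝ) (hη : 0 < η)
    (hyp : ∀ n, ∀ Q₀ ∈ Δ n,
      ENNReal.ofReal η * μ Q₀ ≤
        μ {x ∈ Q₀ |
            (∑' m : ℕ, ∑' Q : Δ m,
                if x ∈ (Q : Set Y) ∧ (Q : Set Y) ⊆ Q₀ then α Q else 0)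
              ≤ ENNReal.ofReal N}) :
    ∀ n, ∀ Q₀ ∈ Δ n,
      (∑' m : ℕ, ∑' Q : Δ m, if (Q : Set Y) ⊆ Q₀ then α Q * μ Q else 0)
        ≤ ENNReal.ofReal (N / η ^ 2) * μ Q₀ := by
  intro n Q₀ hQ₀
  obtain ⟨hQ₀meas, hQ₀pos, hQ₀fin⟩ := hΔ.2.2.1 n Q₀ hQ₀
  have hη0 : ENNReal.ofReal η ≠ 0 := ENNReal.ofReal_ne_zero_iff.mpr hη
  have hgood : ∀ m, ∀ Q ∈ Δ m, μ Q ≤ (ENNReal.ofReal η)⁻¹ * μ (goodSet Δ α (.ofReal N) Q) :=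
    fun m Q hQ ↦ (ENNReal.mul_le_iff_le_inv hη0 ENNReal.ofReal_ne_top).mp (hyp m Q hQ)
  have hη1 : ENNReal.ofReal η ≤ 1 := by
    refine (ENNReal.mul_le_mul_iff_left hQ₀pos.ne' hQ₀fin.ne).mp ?_
    rw [one_mul]
    exact (hyp n Q₀ hQ₀).trans (measure_mono (sep_subset _ _))
  calc _ ≤ (ENNReal.ofReal η)⁻¹ * ENNReal.ofReal N * μ Q₀ :=
        hΔ.tsum_mul_measure_le α hgood hQ₀meas
    _ ≤ ENNReal.ofReal (N / η ^ 2) * μ Q₀ := by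
        rw [ENNReal.ofReal_div_of_pos (by positivity), ENNReal.ofReal_pow hη.le, div_eq_mul_inv,
          mul_comm (ENNReal.ofReal N)]
        gcongr
        exact pow_le_of_le_one zero_le hη1 two_ne_zero

/-- John–Nirenberg–Strömberg type lemma. Let `Δ` be a dyadic filtration
on `(Y, μ)` and `α : Δ → [0,∞)`. If there are `N > 0`, `η > 0` such that for every
`Q₀ ∈ Δ` the set of `x ∈ Q₀` where `Σ_{Q ∋ x, Q ⊆ Q₀} α(Q) ≤ N` has measure at least
`η·μ(Q₀)`, then for every `Q₀ ∈ Δ` one has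
`Σ_{Q ⊆ Q₀} α(Q)·μ(Q) ≤ (N/η²)·μ(Q₀)`. -/
theorem john_nirenberg_stromberg {Y : Type*} [MeasurableSpace Y] (μ : Measure Y)
    (Δ : ℕ → Set (Set Y)) (hΔ : IsDyadicFiltration μ Δ)
    (α : Set Y → ℝ≥0∞) (N η : ℝ) (hN : 0 < N) (hη : 0 < η)
    (hyp : ∀ n, ∀ Q₀ ∈ Δ n,
      ENNReal.ofReal η * μ Q₀ ≤
        μ {x ∈ Q₀ |
            (∑' m : ℕ, ∑' Q : Δ m,
                if x ∈ (Q : Set Y) ∧ (Q : Set Y) ⊆ Q₀ then α Q else 0)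
              ≤ ENNReal.ofReal N}) :
    ∀ n, ∀ Q₀ ∈ Δ n,
      (∑' m : ℕ, ∑' Q : Δ m, if (Q : Set Y) ⊆ Q₀ then α Q * μ Q else 0)
        ≤ ENNReal.ofReal (N / η ^ 2) * μ Q₀ :=
  john_nirenberg_stromberg_general μ Δ hΔ α N η hη hyp
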